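/- arXiv:1901.09896 — 2 statements merged into one kernel-verified Lean document; each statement's English description precedes it below -/
import Mathlib

section
/- Let D be a positive squarefree integer. For every positive divisor d of D², both d·gcd(d, D²/d) and (D²/d)·gcd(d, D²/d) are perfect squares, and the map sending d to the pair (M, L) = (√(d·gcd(d, D²/d)), √((D²/d)·gcd(d, D²/d))) is a bijection from the set of positive divisors of D² onto the set of pairs (M, L) of positive divisors of D with D ∣ M·L. Moreover, under this map gcd(d, D²/d) = gcd(M, L) and d = (M/gcd(M, L))²·gcd(M, L). -/
/-!
Everything is checked one prime at a time. For complementary divisors `d * e = D ^ 2` and a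
prime `p`, write `a, b, c` for the `p`-adic valuations of `d, e, D`; then `a + b = 2 c` and
`c ≤ 1`, so `a + min a b = 2 min a c`, i.e. `d * gcd d e = gcd d D ^ 2`. In the same way
`gcd d D * gcd e D = gcd d e * D` and `gcd (gcd d D) (gcd e D) = gcd d e`. Hence the map is
`d ↦ (gcd d D, gcd e D)`, and `d = M ^ 2 / gcd M L` recovers `d` from its image `(M, L)`.
Conversely, for `M = m g`, `L = l g` with `g = gcd M L` and `D ∣ M L`, one has `D = m l g`, and
`(M, L)` is the image of `d = m ^ 2 g`, whose complement is `l ^ 2 g`.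
-/

namespace Nat

theorem factorization_gcd_apply {a b : ℕ} (ha : a ≠ 0) (hb : b ≠ 0) (p : ℕ) :
    (gcd a b).factorization p = min (a.factorization p) (b.factorization p) := by
  rw [factorization_gcd ha hb, Finsupp.inf_apply]

theorem eq_div_gcd_sq_mul_gcd {d M L : ℕ} (hd : d * gcd M L = M ^ 2) (hM : M ≠ 0) :
    d = (M / gcd M L) ^ 2 * gcd M L := by
  have hg : 0 < gcd M L := gcd_pos_of_pos_left L (Nat.pos_of_ne_zero hM)
  refine Nat.eq_of_mul_eq_mul_right hg ?_
  rw [hd]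
  nth_rw 1 [← Nat.div_mul_cancel (gcd_dvd_left M L)]
  ring

end Nat

namespace Squarefree

variable {D : ℕ} (hD : Squarefree D)
include hD

section Complement

variable {d e : ℕ} (hde : d * e = D ^ 2)
include hde

theorem ne_zero_of_mul_eq_sq_left : d ≠ 0 :=
  left_ne_zero_of_mul (hde ▸ pow_ne_zero 2 hD.ne_zero)

theorem ne_zero_of_mul_eq_sq_right : e ≠ 0 :=
  right_ne_zero_of_mul (hde ▸ pow_ne_zero 2 hD.ne_zero)

theorem factorization_add_of_mul_eq_sq (p : ℕ) :
    d.factorization p + e.factorization p = 2 * D.factorization p := by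
  have h := congrArg (fun n => n.factorization p) hde
  simpa [Nat.factorization_mul (hD.ne_zero_of_mul_eq_sq_left hde)
    (hD.ne_zero_of_mul_eq_sq_right hde), two_mul] using h

theorem mul_gcd_eq_gcd_sq_of_mul_eq_sq : d * Nat.gcd d e = Nat.gcd d D ^ 2 := by
  have hd := hD.ne_zero_of_mul_eq_sq_left hde
  have he := hD.ne_zero_of_mul_eq_sq_right hde
  refine Nat.eq_of_factorization_eq (mul_ne_zero hd (Nat.gcd_ne_zero_left hd))
    (pow_ne_zero 2 (Nat.gcd_ne_zero_left hd)) fun p => ?_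
  rw [Nat.factorization_mul hd (Nat.gcd_ne_zero_left hd), Nat.factorization_pow,
    Finsupp.add_apply, Finsupp.smul_apply, smul_eq_mul, Nat.factorization_gcd_apply hd he,
    Nat.factorization_gcd_apply hd hD.ne_zero]
  have := hD.natFactorization_le_one p
  have := hD.factorization_add_of_mul_eq_sq hde p
  omega

theorem gcd_mul_gcd_eq_of_mul_eq_sq : Nat.gcd d D * Nat.gcd e D = Nat.gcd d e * D := by
  have hd := hD.ne_zero_of_mul_eq_sq_left hde
  have he := hD.ne_zero_of_mul_eq_sq_right hde
  have hdD := Nat.gcd_ne_zero_left (n := D) hd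
  have heD := Nat.gcd_ne_zero_left (n := D) he
  refine Nat.eq_of_factorization_eq (mul_ne_zero hdD heD)
    (mul_ne_zero (Nat.gcd_ne_zero_left hd) hD.ne_zero) fun p => ?_
  rw [Nat.factorization_mul hdD heD, Nat.factorization_mul (Nat.gcd_ne_zero_left hd) hD.ne_zero,
    Finsupp.add_apply, Finsupp.add_apply, Nat.factorization_gcd_apply hd he,
    Nat.factorization_gcd_apply hd hD.ne_zero, Nat.factorization_gcd_apply he hD.ne_zero]
  have := hD.natFactorization_le_one p
  have := hD.factorization_add_of_mul_eq_sq hde p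
  omega

theorem gcd_gcd_gcd_eq_of_mul_eq_sq : Nat.gcd (Nat.gcd d D) (Nat.gcd e D) = Nat.gcd d e := by
  have hd := hD.ne_zero_of_mul_eq_sq_left hde
  have he := hD.ne_zero_of_mul_eq_sq_right hde
  have hdD := Nat.gcd_ne_zero_left (n := D) hd
  have heD := Nat.gcd_ne_zero_left (n := D) he
  refine Nat.eq_of_factorization_eq (Nat.gcd_ne_zero_left hdD) (Nat.gcd_ne_zero_left hd)
    fun p => ?_
  rw [Nat.factorization_gcd_apply hdD heD, Nat.factorization_gcd_apply hd he,
    Nat.factorization_gcd_apply hd hD.ne_zero, Nat.factorization_gcd_apply he hD.ne_zero]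
  have := hD.natFactorization_le_one p
  have := hD.factorization_add_of_mul_eq_sq hde p
  omega

end Complement

section DivisorOfSq

variable {d : ℕ} (hd : d ∣ D ^ 2)
include hd

theorem mul_gcd_div_eq_sq : d * Nat.gcd d (D ^ 2 / d) = Nat.gcd d D ^ 2 :=
  hD.mul_gcd_eq_gcd_sq_of_mul_eq_sq (Nat.mul_div_cancel' hd)

theorem div_mul_gcd_div_eq_sq :
    D ^ 2 / d * Nat.gcd d (D ^ 2 / d) = Nat.gcd (D ^ 2 / d) D ^ 2 := by
  rw [Nat.gcd_comm]
  exact hD.mul_gcd_eq_gcd_sq_of_mul_eq_sq (Nat.div_mul_cancel hd)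

theorem sqrt_mul_gcd_div : Nat.sqrt (d * Nat.gcd d (D ^ 2 / d)) = Nat.gcd d D := by
  rw [hD.mul_gcd_div_eq_sq hd, Nat.sqrt_eq']

theorem sqrt_div_mul_gcd_div :
    Nat.sqrt (D ^ 2 / d * Nat.gcd d (D ^ 2 / d)) = Nat.gcd (D ^ 2 / d) D := by
  rw [hD.div_mul_gcd_div_eq_sq hd, Nat.sqrt_eq']

theorem gcd_gcd_gcd_div :
    Nat.gcd (Nat.gcd d D) (Nat.gcd (D ^ 2 / d) D) = Nat.gcd d (D ^ 2 / d) :=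
  hD.gcd_gcd_gcd_eq_of_mul_eq_sq (Nat.mul_div_cancel' hd)

theorem eq_gcd_div_sq_mul_gcd :
    d = (Nat.gcd d D / Nat.gcd (Nat.gcd d D) (Nat.gcd (D ^ 2 / d) D)) ^ 2 *
      Nat.gcd (Nat.gcd d D) (Nat.gcd (D ^ 2 / d) D) := by
  refine Nat.eq_div_gcd_sq_mul_gcd ?_ (Nat.gcd_ne_zero_right hD.ne_zero)
  rw [hD.gcd_gcd_gcd_div hd, hD.mul_gcd_div_eq_sq hd]

theorem gcd_mul_gcd_div : Nat.gcd d D * Nat.gcd (D ^ 2 / d) D = Nat.gcd d (D ^ 2 / d) * D :=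
  hD.gcd_mul_gcd_eq_of_mul_eq_sq (Nat.mul_div_cancel' hd)

end DivisorOfSq

theorem mul_eq_gcd_mul_of_dvd {M L : ℕ} (hM : M ∣ D) (hL : L ∣ D) (hML : D ∣ M * L) :
    M * L = Nat.gcd M L * D := by
  have hM0 := ne_zero_of_dvd_ne_zero hD.ne_zero hM
  have hL0 := ne_zero_of_dvd_ne_zero hD.ne_zero hL
  refine Nat.eq_of_factorization_eq (mul_ne_zero hM0 hL0)
    (mul_ne_zero (Nat.gcd_ne_zero_left hM0) hD.ne_zero) fun p => ?_
  have hMp := (Nat.factorization_le_iff_dvd hM0 hD.ne_zero).mpr hM p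
  have hLp := (Nat.factorization_le_iff_dvd hL0 hD.ne_zero).mpr hL p
  have hMLp := (Nat.factorization_le_iff_dvd hD.ne_zero (mul_ne_zero hM0 hL0)).mpr hML p
  rw [Nat.factorization_mul hM0 hL0, Finsupp.add_apply] at hMLp ⊢
  rw [Nat.factorization_mul (Nat.gcd_ne_zero_left hM0) hD.ne_zero, Finsupp.add_apply,
    Nat.factorization_gcd_apply hM0 hL0]
  have := hD.natFactorization_le_one p
  omega

theorem exists_mul_eq_sq_of_dvd {M L : ℕ} (hM : M ∣ D) (hL : L ∣ D) (hML : D ∣ M * L) :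
    ∃ d e, d * e = D ^ 2 ∧ d * Nat.gcd d e = M ^ 2 ∧ e * Nat.gcd d e = L ^ 2 := by
  have hg : 0 < Nat.gcd M L :=
    Nat.gcd_pos_of_pos_left L (Nat.pos_of_ne_zero (ne_zero_of_dvd_ne_zero hD.ne_zero hM))
  have hcop := Nat.coprime_div_gcd_div_gcd hg
  have hMg := (Nat.div_mul_cancel (Nat.gcd_dvd_left M L)).symm
  have hLg := (Nat.div_mul_cancel (Nat.gcd_dvd_right M L)).symm
  have hMLD := hD.mul_eq_gcd_mul_of_dvd hM hL hML
  generalize M / Nat.gcd M L = m at *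
  generalize L / Nat.gcd M L = l at *
  generalize Nat.gcd M L = g at *
  subst hMg hLg
  have hDml : D = m * l * g := Nat.eq_of_mul_eq_mul_left hg (by rw [← hMLD]; ring)
  have hgcd : Nat.gcd (m ^ 2 * g) (l ^ 2 * g) = g := by
    rw [Nat.gcd_mul_right, (Nat.Coprime.pow 2 2 hcop).gcd_eq_one, one_mul]
  refine ⟨m ^ 2 * g, l ^ 2 * g, ?_, ?_, ?_⟩
  · rw [hDml]; ring
  · rw [hgcd]; ring
  · rw [hgcd]; ring

end Squarefree

theorem stmt_1_general (D : ℕ) (hsq : Squarefree D) :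
    (∀ d ∈ (D ^ 2).divisors,
        IsSquare (d * Nat.gcd d (D ^ 2 / d)) ∧ IsSquare ((D ^ 2 / d) * Nat.gcd d (D ^ 2 / d))) ∧
    Set.BijOn
      (fun d => (Nat.sqrt (d * Nat.gcd d (D ^ 2 / d)),
                 Nat.sqrt ((D ^ 2 / d) * Nat.gcd d (D ^ 2 / d))))
      ((D ^ 2).divisors : Set ℕ)
      (((D.divisors ×ˢ D.divisors).filter (fun q => D ∣ q.1 * q.2) : Finset (ℕ × ℕ)) :
        Set (ℕ × ℕ)) ∧
    (∀ d ∈ (D ^ 2).divisors,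
        Nat.gcd d (D ^ 2 / d) =
          Nat.gcd (Nat.sqrt (d * Nat.gcd d (D ^ 2 / d)))
            (Nat.sqrt ((D ^ 2 / d) * Nat.gcd d (D ^ 2 / d))) ∧
        d = (Nat.sqrt (d * Nat.gcd d (D ^ 2 / d)) /
              Nat.gcd (Nat.sqrt (d * Nat.gcd d (D ^ 2 / d)))
                (Nat.sqrt ((D ^ 2 / d) * Nat.gcd d (D ^ 2 / d)))) ^ 2 *
            Nat.gcd (Nat.sqrt (d * Nat.gcd d (D ^ 2 / d)))
              (Nat.sqrt ((D ^ 2 / d) * Nat.gcd d (D ^ 2 / d)))) := by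
  have hroot : ∀ d ∈ (D ^ 2).divisors,
      Nat.sqrt (d * Nat.gcd d (D ^ 2 / d)) = Nat.gcd d D ∧
      Nat.sqrt ((D ^ 2 / d) * Nat.gcd d (D ^ 2 / d)) = Nat.gcd (D ^ 2 / d) D :=
    fun d hd => ⟨hsq.sqrt_mul_gcd_div (Nat.dvd_of_mem_divisors hd),
      hsq.sqrt_div_mul_gcd_div (Nat.dvd_of_mem_divisors hd)⟩
  refine ⟨fun d hd => ⟨?_, ?_⟩, ⟨?_, ?_, ?_⟩, fun d hd => ?_⟩
  · exact ⟨Nat.gcd d D, by rw [hsq.mul_gcd_div_eq_sq (Nat.dvd_of_mem_divisors hd), sq]⟩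
  · exact ⟨Nat.gcd (D ^ 2 / d) D,
      by rw [hsq.div_mul_gcd_div_eq_sq (Nat.dvd_of_mem_divisors hd), sq]⟩
  · intro d hd
    dsimp only
    rw [(hroot d hd).1, (hroot d hd).2]
    simp only [Finset.coe_filter, Set.mem_ofPred_eq, Finset.mem_product, Nat.mem_divisors,
      Nat.gcd_dvd_right, ne_eq, hsq.ne_zero, not_false_eq_true, and_self, true_and]
    exact ⟨Nat.gcd d (D ^ 2 / d), by
      rw [hsq.gcd_mul_gcd_div (Nat.dvd_of_mem_divisors hd), mul_comm]⟩
  · refine Set.LeftInvOn.injOn (f₁' := fun q => (q.1 / Nat.gcd q.1 q.2) ^ 2 * Nat.gcd q.1 q.2)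
      fun d hd => ?_
    simp only [(hroot d hd).1, (hroot d hd).2]
    exact (hsq.eq_gcd_div_sq_mul_gcd (Nat.dvd_of_mem_divisors hd)).symm
  · rintro ⟨M, L⟩ hML
    simp only [Finset.coe_filter, Set.mem_ofPred_eq, Finset.mem_product, Nat.mem_divisors] at hML
    obtain ⟨⟨⟨hM, -⟩, ⟨hL, -⟩⟩, hDML⟩ := hML
    obtain ⟨d, e, hde, hdM, heL⟩ := hsq.exists_mul_eq_sq_of_dvd hM hL hDML
    have he : D ^ 2 / d = e := Nat.div_eq_of_eq_mul_right
      (Nat.pos_of_ne_zero (hsq.ne_zero_of_mul_eq_sq_left hde)) hde.symm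
    refine ⟨d, Nat.mem_divisors.mpr ⟨⟨e, hde.symm⟩, pow_ne_zero 2 hsq.ne_zero⟩, ?_⟩
    simp only [he, hdM, heL, Nat.sqrt_eq']
  · rw [(hroot d hd).1, (hroot d hd).2]
    exact ⟨(hsq.gcd_gcd_gcd_div (Nat.dvd_of_mem_divisors hd)).symm,
      hsq.eq_gcd_div_sq_mul_gcd (Nat.dvd_of_mem_divisors hd)⟩

/-- For `D` a positive squarefree integer, for every positive divisor `d` of
`D²`, both `d·gcd(d, D²/d)` and `(D²/d)·gcd(d, D²/d)` are perfect squares, the map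
`d ↦ (√(d·gcd(d, D²/d)), √((D²/d)·gcd(d, D²/d)))` is a bijection from the divisors of `D²`
onto the pairs `(M, L)` of divisors of `D` with `D ∣ M·L`, and under this map
`gcd(d, D²/d) = gcd(M, L)` and `d = (M/gcd(M, L))²·gcd(M, L)`. -/
theorem stmt_1 (D : ℕ) (hD : 0 < D) (hsq : Squarefree D) :
    (∀ d ∈ (D ^ 2).divisors,
        IsSquare (d * Nat.gcd d (D ^ 2 / d)) ∧ IsSquare ((D ^ 2 / d) * Nat.gcd d (D ^ 2 / d))) ∧
    Set.BijOn
      (fun d => (Nat.sqrt (d * Nat.gcd d (D ^ 2 / d)),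
                 Nat.sqrt ((D ^ 2 / d) * Nat.gcd d (D ^ 2 / d))))
      ((D ^ 2).divisors : Set ℕ)
      (((D.divisors ×ˢ D.divisors).filter (fun q => D ∣ q.1 * q.2) : Finset (ℕ × ℕ)) :
        Set (ℕ × ℕ)) ∧
    (∀ d ∈ (D ^ 2).divisors,
        Nat.gcd d (D ^ 2 / d) =
          Nat.gcd (Nat.sqrt (d * Nat.gcd d (D ^ 2 / d)))
            (Nat.sqrt ((D ^ 2 / d) * Nat.gcd d (D ^ 2 / d))) ∧
        d = (Nat.sqrt (d * Nat.gcd d (D ^ 2 / d)) /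
              Nat.gcd (Nat.sqrt (d * Nat.gcd d (D ^ 2 / d)))
                (Nat.sqrt ((D ^ 2 / d) * Nat.gcd d (D ^ 2 / d)))) ^ 2 *
            Nat.gcd (Nat.sqrt (d * Nat.gcd d (D ^ 2 / d)))
              (Nat.sqrt ((D ^ 2 / d) * Nat.gcd d (D ^ 2 / d)))) :=
  stmt_1_general D hsq
end

section
/- Let D be a positive squarefree integer and C a positive divisor of D. Let r, s, t be positive integers with r ∣ D/C, s ∣ C, t ∣ C and gcd(s, t) = 1, and let x be an integer with gcd(x, D) = 1. Let K be a positive divisor of D with gcd(K, r·s·t) = 1, and let α be a positive divisor of K. Then the rational numbers (r·s²·t·α·x)/(D·C) and (r·s²·t·((K·gcd(K, C))/α)·x)/((D·C)/(K·gcd(K, C))) are Γ₀((D·C)/(K·gcd(K, C)))-equivalent. -/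
/-!
Put `g = gcd(K, C)`, `N = D·C/(K·g)`, `β = K·g/α` and `w = r·s²·t·x`. Since `D·C = N·β·α`,
the two cusps are `w/(Nβ)` and `wβ/N`. Because `D` is squarefree, `K·g` is a unitary divisor of
`D·C`, so `β ∣ K·g` is coprime to `N`; and `β ∣ K²` is coprime to `w`. A Bézout relation
`uβ + vNw = 1` then yields an explicit matrix of `Γ₀(N)` carrying `w/(Nβ)` to `wβ/N`.
-/

def Gamma0Equivalent (n : ℕ) (q₁ q₂ : ℚ) : Prop :=
  ∃ a b c d : ℤ, a * d - b * (n : ℤ) * c = 1 ∧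
    (a : ℚ) * q₁ + b = q₂ * ((n : ℚ) * c * q₁ + d)

theorem gamma0Equivalent_div_mul_mul_div {n : ℕ} {β w : ℤ} (hn : n ≠ 0) (hβ : β ≠ 0)
    (h : IsCoprime β (n * w)) : Gamma0Equivalent n (w / (n * β)) (w * β / n) := by
  obtain ⟨u, v, huv⟩ := h
  refine ⟨β * (1 + n * v * w), -v * w ^ 2, v * n, u,
    by linear_combination (1 + n * v * w) * huv, ?_⟩
  have huvQ : (u : ℚ) * β + v * (n * w) = 1 := by exact_mod_cast huv
  push_cast
  field_simp
  -- both sides equal `w / n`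
  linear_combination (-(w : ℚ)) * huvQ

theorem isCoprime_sq_mul_sq_mul {R : Type*} [CommRing R] {k r s t x : R}
    (hrst : IsCoprime k (r * s * t)) (hx : IsCoprime k x) :
    IsCoprime (k ^ 2) (r * s ^ 2 * t * x) :=
  ((hrst.pow_right (n := 2)).mul_right hx
    |>.of_isCoprime_of_dvd_right (Dvd.intro (r * t) (by ring))).pow_left

theorem Nat.coprime_div_of_squarefree {n d : ℕ} (hn : Squarefree n) (hd : d ∣ n) :
    d.Coprime (n / d) :=
  Nat.coprime_of_squarefree_mul (by rwa [Nat.mul_div_cancel' hd])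

theorem Nat.coprime_mul_gcd_div_of_squarefree {D C K : ℕ} (hD : Squarefree D) (hC : C ∣ D)
    (hK : K ∣ D) : (K * K.gcd C).Coprime (D * C / (K * K.gcd C)) := by
  have hCsq : Squarefree C := hD.squarefree_of_dvd hC
  have hKD : K.Coprime (D / K) := coprime_div_of_squarefree hD hK
  have hgC : (K.gcd C).Coprime (C / K.gcd C) := coprime_div_of_squarefree hCsq (K.gcd_dvd_right C)
  have hKC : K.Coprime (C / K.gcd C) := by
    simpa only [Nat.gcd_comm C K] using
      (coprime_div_gcd_of_squarefree hCsq (ne_zero_of_dvd_ne_zero hD.ne_zero hK)).symm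
  rw [← Nat.div_mul_div_comm hK (K.gcd_dvd_right C)]
  exact (hKD.mul_right hKC).mul_left
    ((hKD.coprime_dvd_left (K.gcd_dvd_left C)).mul_right hgC)

theorem stmt_7_general (D C : ℕ) (hsq : Squarefree D) (hC : C ∣ D)
    (r s t : ℕ)
    (x : ℤ) (hx : Int.gcd x (D : ℤ) = 1)
    (K : ℕ) (hK : K ∣ D) (hKrst : Nat.gcd K (r * s * t) = 1)
    (α : ℕ) (hα : α ∣ K)
    (q₁ q₂ : ℚ)
    (hq₁ : q₁ = (r * s ^ 2 * t * α : ℚ) * (x : ℚ) / (D * C : ℚ))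
    (hq₂ : q₂ = (r * s ^ 2 * t * (K * Nat.gcd K C / α : ℕ) : ℚ) * (x : ℚ) /
        ((D * C / (K * Nat.gcd K C) : ℕ) : ℚ)) :
    ∃ a b c d : ℤ,
      a * d - b * ((D * C / (K * Nat.gcd K C) : ℕ) : ℤ) * c = 1 ∧
      (a : ℚ) * q₁ + (b : ℚ) =
        q₂ * (((D * C / (K * Nat.gcd K C) : ℕ) : ℚ) * (c : ℚ) * q₁ + (d : ℚ)) := by
  set n := D * C / (K * K.gcd C)
  set β := K * K.gcd C / α
  set w : ℤ := r * s ^ 2 * t * x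
  have hαKg : α ∣ K * K.gcd C := hα.mul_right _
  have hDC_eq : n * β * α = D * C := by
    rw [mul_assoc, Nat.div_mul_cancel hαKg,
      Nat.div_mul_cancel (mul_dvd_mul hK (K.gcd_dvd_right C))]
  have hDC : D * C ≠ 0 := mul_ne_zero hsq.ne_zero (ne_zero_of_dvd_ne_zero hsq.ne_zero hC)
  obtain ⟨⟨hn, hβ⟩, hα0⟩ : (n ≠ 0 ∧ β ≠ 0) ∧ α ≠ 0 := by
    simpa only [← hDC_eq, mul_ne_zero_iff] using hDC
  have hβw : IsCoprime (β : ℤ) w := by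
    refine (isCoprime_sq_mul_sq_mul (Nat.isCoprime_iff_coprime.mpr hKrst) ?_)
      |>.of_isCoprime_of_dvd_left ?_
    · exact (Int.isCoprime_iff_gcd_eq_one.mpr hx).symm.of_isCoprime_of_dvd_left
        (Int.natCast_dvd_natCast.mpr hK)
    · rw [sq]
      exact_mod_cast (Nat.div_dvd_of_dvd hαKg).trans (mul_dvd_mul_left K (K.gcd_dvd_left C))
  have hβn : IsCoprime (β : ℤ) n := Nat.isCoprime_iff_coprime.mpr <|
    (Nat.coprime_mul_gcd_div_of_squarefree hsq hC hK).coprime_dvd_left (Nat.div_dvd_of_dvd hαKg)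
  have hq₁' : q₁ = w / (n * β) := by
    rw [hq₁, ← Nat.cast_mul, ← hDC_eq]
    push_cast [w]
    field_simp
  have hq₂' : q₂ = w * β / n := by
    rw [hq₂]
    push_cast [w]
    ring
  rw [hq₁', hq₂']
  exact gamma0Equivalent_div_mul_mul_div hn (Int.natCast_ne_zero.mpr hβ) (hβn.mul_right hβw)

/-- for `K` a positive divisor of `D` with `gcd(K, r·s·t) = 1` and `α` a
positive divisor of `K`, the cusps `(r·s²·t·α·x)/(D·C)` and
`(r·s²·t·((K·gcd(K,C))/α)·x)/((D·C)/(K·gcd(K,C)))` are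
`Γ₀((D·C)/(K·gcd(K,C)))`-equivalent. -/
theorem stmt_7 (D C : ℕ) (hD : 0 < D) (hsq : Squarefree D) (hC : C ∣ D) (hC0 : 0 < C)
    (r s t : ℕ) (hr0 : 0 < r) (hs0 : 0 < s) (ht0 : 0 < t)
    (hr : r ∣ D / C) (hs : s ∣ C) (ht : t ∣ C) (hst : Nat.gcd s t = 1)
    (x : ℤ) (hx : Int.gcd x (D : ℤ) = 1)
    (K : ℕ) (hK0 : 0 < K) (hK : K ∣ D) (hKrst : Nat.gcd K (r * s * t) = 1)
    (α : ℕ) (hα0 : 0 < α) (hα : α ∣ K)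
    (q₁ q₂ : ℚ)
    (hq₁ : q₁ = (r * s ^ 2 * t * α : ℚ) * (x : ℚ) / (D * C : ℚ))
    (hq₂ : q₂ = (r * s ^ 2 * t * (K * Nat.gcd K C / α : ℕ) : ℚ) * (x : ℚ) /
        ((D * C / (K * Nat.gcd K C) : ℕ) : ℚ)) :
    ∃ a b c d : ℤ,
      a * d - b * ((D * C / (K * Nat.gcd K C) : ℕ) : ℤ) * c = 1 ∧
      (a : ℚ) * q₁ + (b : ℚ) =
        q₂ * (((D * C / (K * Nat.gcd K C) : ℕ) : ℚ) * (c : ℚ) * q₁ + (d : ℚ)) :=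
  stmt_7_general D C hsq hC r s t x hx K hK hKrst α hα q₁ q₂ hq₁ hq₂
end
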